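/- arXiv:1908.01089 — 9 statements merged into one kernel-verified Lean document; each statement's English description precedes it below -/
import Mathlib

section
/- If a sequence of iterates (x_k) in R^d satisfies: (a) linear convergence to a set X̂: dist(x_k, X̂) ≤ A(1-c)^k dist(x_0, X̂) for all k, with A ≥ 1 and c ∈ (0,1); and (b) descent towards all points of X̂: ‖x_{k+1} - y‖ ≤ ‖x_k - y‖ for every y ∈ X̂ and every k; then the total path length satisfies Σ_{k=0}^∞ ‖x_k - x_{k+1}‖ ≤ (2A/c) · dist(x_0, X̂). -/
/-!
If `x_{k+1}` is no farther than `x_k` from every point of `X̂`, the triangle inequality through any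
`y ∈ X̂` gives `‖x_k - x_{k+1}‖ ≤ 2 ‖x_k - y‖`, hence `‖x_k - x_{k+1}‖ ≤ 2 dist(x_k, X̂)`. By linear
convergence the step lengths are then dominated by the geometric sequence `2A(1-c)^k dist(x_0, X̂)`,
whose sum is `(2A/c) dist(x_0, X̂)`.
-/

open Metric ENNReal

theorem dist_le_two_mul_infDist_of_forall_dist_le {α : Type*} [PseudoMetricSpace α] {s : Set α}
    (hs : s.Nonempty) {x y : α} (h : ∀ z ∈ s, dist y z ≤ dist x z) :
    dist x y ≤ 2 * infDist x s := by
  have hhalf : dist x y / 2 ≤ infDist x s := by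
    refine (le_infDist hs).2 fun z hz => ?_
    linarith [dist_triangle_right x y z, h z hz]
  linarith

theorem tsum_edist_le_of_dist_le_geometric {α : Type*} [PseudoMetricSpace α] {x : ℕ → α}
    {C r : ℝ} (hr0 : 0 ≤ r) (hr1 : r < 1) (h : ∀ k, dist (x k) (x (k + 1)) ≤ C * r ^ k) :
    ∑' k, edist (x k) (x (k + 1)) ≤ ENNReal.ofReal (C / (1 - r)) := by
  have hgeom : HasSum (fun k => C * r ^ k) (C / (1 - r)) := by
    simpa only [div_eq_mul_inv] using (hasSum_geometric_of_lt_one hr0 hr1).mul_left C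
  have hsummable : Summable fun k => dist (x k) (x (k + 1)) :=
    hgeom.summable.of_nonneg_of_le (fun _ => dist_nonneg) h
  simp only [edist_dist]
  rw [← ENNReal.ofReal_tsum_of_nonneg (fun _ => dist_nonneg) hsummable]
  exact ENNReal.ofReal_le_ofReal (hasSum_le h hsummable.hasSum hgeom)

theorem path_length_linear_convergence_descent_general {d : ℕ}
    (x : ℕ → EuclideanSpace ℝ (Fin d))
    (S : Set (EuclideanSpace ℝ (Fin d))) (hS : S.Nonempty)
    (A c : ℝ) (hc0 : 0 < c) (hc1 : c < 1)
    (hlin : ∀ k : ℕ, infDist (x k) S ≤ A * (1 - c) ^ k * infDist (x 0) S)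
    (hdescent : ∀ (k : ℕ), ∀ y ∈ S, ‖x (k + 1) - y‖ ≤ ‖x k - y‖) :
    ∑' k : ℕ, (‖x k - x (k + 1)‖₊ : ℝ≥0∞) ≤
      ENNReal.ofReal (2 * A / c * infDist (x 0) S) := by
  have hstep : ∀ k, dist (x k) (x (k + 1)) ≤ 2 * A * infDist (x 0) S * (1 - c) ^ k := by
    intro k
    have hnear := dist_le_two_mul_infDist_of_forall_dist_le hS (x := x k) (y := x (k + 1))
      (by simpa only [dist_eq_norm] using hdescent k)
    linarith [hlin k]
  calc ∑' k, (‖x k - x (k + 1)‖₊ : ℝ≥0∞) = ∑' k, edist (x k) (x (k + 1)) := by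
        simp only [edist_eq_enorm_sub, enorm_eq_nnnorm]
    _ ≤ ENNReal.ofReal (2 * A * infDist (x 0) S / (1 - (1 - c))) :=
        tsum_edist_le_of_dist_le_geometric (by linarith) (by linarith) hstep
    _ = ENNReal.ofReal (2 * A / c * infDist (x 0) S) := by
        rw [show (1 : ℝ) - (1 - c) = c by ring, mul_div_right_comm]

theorem path_length_linear_convergence_descent {d : ℕ}
    (x : ℕ → EuclideanSpace ℝ (Fin d))
    (S : Set (EuclideanSpace ℝ (Fin d))) (hS : S.Nonempty) (hScl : IsClosed S)
    (A c : ℝ) (hA : 1 ≤ A) (hc0 : 0 < c) (hc1 : c < 1)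
    (hlin : ∀ k : ℕ, infDist (x k) S ≤ A * (1 - c) ^ k * infDist (x 0) S)
    (hdescent : ∀ (k : ℕ), ∀ y ∈ S, ‖x (k + 1) - y‖ ≤ ‖x k - y‖) :
    ∑' k : ℕ, (‖x k - x (k + 1)‖₊ : ℝ≥0∞) ≤
      ENNReal.ofReal (2 * A / c * infDist (x 0) S) :=
  path_length_linear_convergence_descent_general x S hS A c hc0 hc1 hlin hdescent
end

section
/- Let f : R^d → R be continuously differentiable with L-Lipschitz gradient, satisfying the μ-PKL inequality ‖∇f(x)‖² ≥ 2μ(f(x) - f*) for all x, where f* = inf f is attained. Then for gradient descent x_{k+1} = x_k - η∇f(x_k) with step size η ≤ 1/L, the path length satisfies Σ_{k=0}^∞ ‖x_k - x_{k+1}‖ ≤ √(8/μ) · √(f(x_0) - f*). -/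
/-!
Along gradient descent with `η ≤ 1 / L`, the descent lemma gives
`f x_{k+1} ≤ f x_k - (η / 2) ‖∇f x_k‖²`. Writing `a = f x_k - f*`, `b = f x_{k+1} - f*` and
`s = ‖∇f x_k‖`, we get `a - b ≤ 2 √a (√a - √b)` and, by the PKL inequality, `4 √a ≤ √(8 / μ) s`;
hence the step length `η s` is at most `√(8 / μ) (√a - √b)`, and the path length telescopes.
-/

open Real InnerProductSpace

section LipschitzGradient

variable {E : Type*} [NormedAddCommGroup E] [InnerProductSpace ℝ E] [CompleteSpace E]
  {f : E → ℝ} {f' : E → E} {L : ℝ}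

theorem image_add_le_of_lipschitz_gradient (hgrad : ∀ x, HasGradientAt f (f' x) x)
    (hlip : ∀ x y, ‖f' x - f' y‖ ≤ L * ‖x - y‖) (x v : E) :
    f (x + v) ≤ f x + ⟪f' x, v⟫_ℝ + L / 2 * ‖v‖ ^ 2 := by
  set g : ℝ → ℝ := fun t ↦ f (x + t • v) - ⟪f' x, v⟫_ℝ * t - L / 2 * ‖v‖ ^ 2 * t ^ 2
  have hg : ∀ t, HasDerivAt g (⟪f' (x + t • v), v⟫_ℝ - ⟪f' x, v⟫_ℝ - L * ‖v‖ ^ 2 * t) t := by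
    intro t
    have hline : HasDerivAt (fun t : ℝ ↦ x + t • v) v t := by
      simpa using ((hasDerivAt_id t).smul_const v).const_add x
    have hf := (hgrad (x + t • v)).hasFDerivAt.comp_hasDerivAt t hline
    rw [toDual_apply_apply] at hf
    exact ((hf.sub ((hasDerivAt_id t).const_mul _)).sub
      ((hasDerivAt_pow 2 t).const_mul _)).congr_deriv (by ring)
  have hg' : ∀ t, 0 ≤ t → ⟪f' (x + t • v), v⟫_ℝ - ⟪f' x, v⟫_ℝ - L * ‖v‖ ^ 2 * t ≤ 0 := by
    intro t ht
    have := hlip (x + t • v) x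
    rw [add_sub_cancel_left, norm_smul, Real.norm_of_nonneg ht] at this
    refine sub_nonpos.2 ?_
    calc ⟪f' (x + t • v), v⟫_ℝ - ⟪f' x, v⟫_ℝ = ⟪f' (x + t • v) - f' x, v⟫_ℝ :=
          (inner_sub_left _ _ _).symm
      _ ≤ ‖f' (x + t • v) - f' x‖ * ‖v‖ := real_inner_le_norm _ _
      _ ≤ L * (t * ‖v‖) * ‖v‖ := by gcongr
      _ = L * ‖v‖ ^ 2 * t := by ring
  have hanti : AntitoneOn g (Set.Icc 0 1) :=
    antitoneOn_of_hasDerivWithinAt_nonpos (convex_Icc 0 1)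
      (fun t _ ↦ (hg t).continuousAt.continuousWithinAt)
      (fun t _ ↦ (hg t).hasDerivWithinAt)
      (fun t ht ↦ hg' t (interior_subset ht).1)
  have := hanti (by simp) (by simp) zero_le_one
  simp only [g, zero_smul, one_smul, add_zero, mul_zero, mul_one, one_pow, sub_zero,
    ne_eq, OfNat.ofNat_ne_zero, not_false_eq_true, zero_pow] at this
  linarith

theorem image_sub_smul_gradient_le {η : ℝ} (hgrad : ∀ x, HasGradientAt f (f' x) x)
    (hlip : ∀ x y, ‖f' x - f' y‖ ≤ L * ‖x - y‖) (hη : 0 ≤ η) (hLη : L * η ≤ 1) (x : E) :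
    f (x - η • f' x) ≤ f x - η / 2 * ‖f' x‖ ^ 2 := by
  have h := image_add_le_of_lipschitz_gradient hgrad hlip x (-(η • f' x))
  rw [← sub_eq_add_neg, inner_neg_right, real_inner_smul_right, real_inner_self_eq_norm_sq,
    norm_neg, norm_smul, Real.norm_of_nonneg hη] at h
  nlinarith [mul_le_mul_of_nonneg_right hLη (mul_nonneg hη (sq_nonneg ‖f' x‖))]

end LipschitzGradient

theorem mul_le_sqrt_mul_sqrt_sub_sqrt {μ η s a b : ℝ} (hμ : 0 < μ) (hη : 0 ≤ η) (hs : 0 ≤ s)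
    (hb : 0 ≤ b) (hdec : b ≤ a - η / 2 * s ^ 2) (hpkl : 2 * μ * a ≤ s ^ 2) :
    η * s ≤ √(8 / μ) * (√a - √b) := by
  have hba : b ≤ a := by nlinarith [mul_nonneg hη (sq_nonneg s)]
  have ha : 0 ≤ a := hb.trans hba
  have hgap : 0 ≤ √a - √b := sub_nonneg.2 (Real.sqrt_le_sqrt hba)
  have hdiff : a - b ≤ 2 * √a * (√a - √b) := by
    nlinarith [Real.sq_sqrt ha, Real.sq_sqrt hb, Real.sqrt_nonneg b]
  have hsqrt : 4 * √a ≤ √(8 / μ) * s := by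
    refine le_of_pow_le_pow_left₀ two_ne_zero (by positivity) ?_
    rw [mul_pow, mul_pow, Real.sq_sqrt ha, Real.sq_sqrt (by positivity)]
    calc 4 ^ 2 * a = 8 / μ * (2 * μ * a) := by field_simp; ring
      _ ≤ 8 / μ * s ^ 2 := by gcongr
  rcases hs.eq_or_lt with rfl | hs
  · rw [mul_zero]
    exact mul_nonneg (Real.sqrt_nonneg _) hgap
  refine le_of_mul_le_mul_left ?_ hs
  calc s * (η * s) = η * s ^ 2 := by ring
    _ ≤ 4 * √a * (√a - √b) := by linarith
    _ ≤ √(8 / μ) * s * (√a - √b) := by gcongr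
    _ = s * (√(8 / μ) * (√a - √b)) := by ring

theorem tsum_ofReal_le_of_le_sub_succ {u V : ℕ → ℝ} (hu : ∀ k, 0 ≤ u k) (hV : ∀ k, 0 ≤ V k)
    (h : ∀ k, u k ≤ V k - V (k + 1)) :
    ∑' k, ENNReal.ofReal (u k) ≤ ENNReal.ofReal (V 0) := by
  refine ENNReal.tsum_le_of_sum_range_le fun n ↦ ?_
  rw [← ENNReal.ofReal_sum_of_nonneg fun k _ ↦ hu k]
  refine ENNReal.ofReal_le_ofReal ?_
  calc ∑ k ∈ Finset.range n, u k ≤ ∑ k ∈ Finset.range n, (V k - V (k + 1)) :=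
        Finset.sum_le_sum fun k _ ↦ h k
    _ = V 0 - V n := Finset.sum_range_sub' V n
    _ ≤ V 0 := sub_le_self _ (hV n)

open Metric ENNReal

theorem pkl_gd_path_length_general {d : ℕ}
    (f : EuclideanSpace ℝ (Fin d) → ℝ)
    (f' : EuclideanSpace ℝ (Fin d) → EuclideanSpace ℝ (Fin d))
    (L μ η fstar : ℝ) (hμ : 0 < μ)
    (hgrad : ∀ x, HasGradientAt f (f' x) x)
    (hlip : ∀ x y, ‖f' x - f' y‖ ≤ L * ‖x - y‖)
    (hlb : ∀ x, fstar ≤ f x)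
    (hpkl : ∀ x, 2 * μ * (f x - fstar) ≤ ‖f' x‖ ^ 2)
    (hη0 : 0 < η) (hη : η ≤ 1 / L)
    (x : ℕ → EuclideanSpace ℝ (Fin d))
    (hx : ∀ k : ℕ, x (k + 1) = x k - η • f' (x k)) :
    ∑' k : ℕ, (‖x k - x (k + 1)‖₊ : ℝ≥0∞) ≤
      ENNReal.ofReal (Real.sqrt (8 / μ) * Real.sqrt (f (x 0) - fstar)) := by
  have hL : 0 < L := one_div_pos.mp (hη0.trans_le hη)
  have hLη : L * η ≤ 1 := by rwa [le_div_iff₀ hL, mul_comm] at hη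
  simp_rw [← enorm_eq_nnnorm, ← ofReal_norm]
  refine tsum_ofReal_le_of_le_sub_succ (V := fun k ↦ √(8 / μ) * √(f (x k) - fstar))
    (fun k ↦ norm_nonneg (x k - x (k + 1))) (fun k ↦ by positivity) fun k ↦ ?_
  have hdec : f (x (k + 1)) ≤ f (x k) - η / 2 * ‖f' (x k)‖ ^ 2 :=
    hx k ▸ image_sub_smul_gradient_le hgrad hlip hη0.le hLη (x k)
  have hstep : x k - x (k + 1) = η • f' (x k) := by rw [hx k, _root_.sub_sub_cancel]
  rw [hstep, norm_smul, Real.norm_of_nonneg hη0.le, ← mul_sub]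
  exact mul_le_sqrt_mul_sqrt_sub_sqrt hμ hη0.le (norm_nonneg _) (sub_nonneg.2 (hlb _))
    (by linarith) (hpkl _)

theorem pkl_gd_path_length {d : ℕ}
    (f : EuclideanSpace ℝ (Fin d) → ℝ)
    (f' : EuclideanSpace ℝ (Fin d) → EuclideanSpace ℝ (Fin d))
    (L μ η fstar : ℝ) (hL : 0 < L) (hμ : 0 < μ)
    (hgrad : ∀ x, HasGradientAt f (f' x) x)
    (hlip : ∀ x y, ‖f' x - f' y‖ ≤ L * ‖x - y‖)
    (hattained : ∃ xm, f xm = fstar) (hlb : ∀ x, fstar ≤ f x)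
    (hpkl : ∀ x, 2 * μ * (f x - fstar) ≤ ‖f' x‖ ^ 2)
    (hη0 : 0 < η) (hη : η ≤ 1 / L)
    (x : ℕ → EuclideanSpace ℝ (Fin d))
    (hx : ∀ k : ℕ, x (k + 1) = x k - η • f' (x k)) :
    ∑' k : ℕ, (‖x k - x (k + 1)‖₊ : ℝ≥0∞) ≤
      ENNReal.ofReal (Real.sqrt (8 / μ) * Real.sqrt (f (x 0) - fstar)) :=
  pkl_gd_path_length_general f f' L μ η fstar hμ hgrad hlip hlb hpkl hη0 hη x hx
end

section
/- Let f : R^d → R be continuously differentiable satisfying the μ-PKL inequality ‖∇f(x)‖² ≥ 2μ(f(x) - f*) for all x, where f* is the attained minimum and X* the set of minimizers. Then f satisfies quadratic growth: f(x) - f* ≥ (μ/2) · dist(x, X*)² for all x (assuming X* is nonempty and closed and the gradient flow from any point converges to X*). -/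
/-!
Follow the gradient flow `γ` from `x` and put `h = f ∘ γ - f*`, so `h' = -‖∇f(γ)‖²`. While `h > 0`,
the PKL inequality gives `√(μ/2) ‖γ'‖ ≤ -(√h)'`, so the flow has length at most
`√(h 0) / √(μ/2)`. The flow either hits `X*` at the first zero of `h` or approaches `X*`
as `t → ∞`; either way `dist(x, X*) ≤ √(2 (f x - f*) / μ)`.
-/

open Metric Filter Set

theorem HasGradientAt.comp_hasDerivAt {F : Type*} [NormedAddCommGroup F] [InnerProductSpace ℝ F]
    [CompleteSpace F] {f : F → ℝ} {g : F} {γ : ℝ → F} {v : F} {t : ℝ}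
    (hf : HasGradientAt f g (γ t)) (hγ : HasDerivAt γ v t) :
    HasDerivAt (f ∘ γ) (inner ℝ g v) t :=
  hf.hasFDerivAt.comp_hasDerivAt t hγ

theorem Real.sqrt_half_mul_le_sq_div {μ p a : ℝ} (hμ : 0 ≤ μ) (hp : 0 < p) (ha : 0 ≤ a)
    (h : 2 * μ * p ≤ a ^ 2) : √(μ / 2) * a ≤ a ^ 2 / (2 * √p) := by
  have hs : √(μ / 2) ^ 2 = μ / 2 := Real.sq_sqrt (by positivity)
  have hr : √p ^ 2 = p := Real.sq_sqrt hp.le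
  have hsr : 2 * √(μ / 2) * √p ≤ a :=
    (pow_le_pow_iff_left₀ (by positivity) ha two_ne_zero).1 (by nlinarith)
  rw [le_div_iff₀ (by positivity)]
  nlinarith

theorem sqrt_half_mul_norm_sub_le_sqrt_sub_sqrt {F : Type*} [NormedAddCommGroup F]
    [NormedSpace ℝ F] {γ v : ℝ → F} {φ : ℝ → ℝ} {μ a b : ℝ} (hμ : 0 ≤ μ) (hab : a ≤ b)
    (hγ : ∀ t ∈ Icc a b, HasDerivAt γ (v t) t)
    (hφ : ∀ t ∈ Icc a b, HasDerivAt φ (-‖v t‖ ^ 2) t)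
    (hpos : ∀ t ∈ Ico a b, 0 < φ t) (hpkl : ∀ t ∈ Ico a b, 2 * μ * φ t ≤ ‖v t‖ ^ 2) :
    √(μ / 2) * ‖γ b - γ a‖ ≤ √(φ a) - √(φ b) := by
  have hsqrt : ∀ t ∈ Ico a b,
      HasDerivAt (fun s => √(φ a) - √(φ s)) (‖v t‖ ^ 2 / (2 * √(φ t))) t := by
    intro t ht
    exact (((hφ t (Ico_subset_Icc_self ht)).sqrt (hpos t ht).ne').const_sub (√(φ a))).congr_deriv
      (by ring)
  have hbound := image_norm_le_of_norm_deriv_right_le_deriv_boundary'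
    (f := fun t => √(μ / 2) • (γ t - γ a)) (f' := fun t => √(μ / 2) • v t)
    (B := fun s => √(φ a) - √(φ s)) (B' := fun t => ‖v t‖ ^ 2 / (2 * √(φ t)))
    ((HasDerivAt.continuousOn hγ).sub continuousOn_const |>.const_smul _)
    (fun t ht => ((hγ t (Ico_subset_Icc_self ht)).sub_const (γ a)).const_smul _
      |>.hasDerivWithinAt)
    (by simp)
    (continuousOn_const.sub <| Real.continuous_sqrt.comp_continuousOn <| HasDerivAt.continuousOn hφ)
    (fun t ht => (hsqrt t ht).hasDerivWithinAt)
    (fun t ht => by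
      rw [norm_smul, Real.norm_of_nonneg (Real.sqrt_nonneg _)]
      exact Real.sqrt_half_mul_le_sq_div hμ (hpos t ht) (norm_nonneg _) (hpkl t ht))
    (right_mem_Icc.2 hab)
  simpa only [norm_smul, Real.norm_of_nonneg (Real.sqrt_nonneg _)] using hbound

theorem ContinuousOn.exists_first_eq {X : Type*} [TopologicalSpace X] [T1Space X]
    {φ : ℝ → X} {a b : ℝ} {y : X} (hφ : ContinuousOn φ (Icc a b)) (hab : a ≤ b) (hb : φ b = y) :
    ∃ c ∈ Icc a b, φ c = y ∧ ∀ t ∈ Ico a c, φ t ≠ y := by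
  set A := Icc a b ∩ φ ⁻¹' {y}
  have hA : IsClosed A := hφ.preimage_isClosed_of_isClosed isClosed_Icc isClosed_singleton
  have hbdd : BddBelow A := ⟨a, fun t ht => ht.1.1⟩
  obtain ⟨hc, hφc⟩ := hA.csInf_mem ⟨b, ⟨hab, le_rfl⟩, hb⟩ hbdd
  refine ⟨sInf A, hc, hφc, fun t ht hφt => ?_⟩
  exact (csInf_le hbdd ⟨⟨ht.1, ht.2.le.trans hc.2⟩, hφt⟩).not_gt ht.2

theorem infDist_le_of_dist_le_before_zero {E : Type*} [PseudoMetricSpace E] {γ : ℝ → E}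
    {S : Set E} {φ : ℝ → ℝ} {L : ℝ} (hφ : ContinuousOn φ (Ici 0))
    (hzero : ∀ t, φ t = 0 → γ t ∈ S) (hlim : Tendsto (fun t => infDist (γ t) S) atTop (nhds 0))
    (hlen : ∀ T, 0 ≤ T → (∀ t ∈ Ico 0 T, φ t ≠ 0) → dist (γ 0) (γ T) ≤ L) :
    infDist (γ 0) S ≤ L := by
  by_cases hz : ∃ T, 0 ≤ T ∧ φ T = 0
  · obtain ⟨T, hT, hφT⟩ := hz
    obtain ⟨c, hc, hφc, hne⟩ := (hφ.mono Icc_subset_Ici_self).exists_first_eq hT hφT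
    exact (infDist_le_dist_of_mem (hzero c hφc)).trans (hlen c hc.1 hne)
  · push Not at hz
    have hev : ∀ᶠ T in atTop, infDist (γ 0) S ≤ infDist (γ T) S + L := by
      filter_upwards [eventually_ge_atTop 0] with T hT
      linarith [infDist_le_infDist_add_dist (x := γ 0) (y := γ T) (s := S),
        hlen T hT fun t ht => hz t ht.1]
    simpa using ge_of_tendsto (hlim.add_const L) hev

theorem pkl_implies_quadratic_growth_general {d : ℕ}
    (f : EuclideanSpace ℝ (Fin d) → ℝ)
    (f' : EuclideanSpace ℝ (Fin d) → EuclideanSpace ℝ (Fin d))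
    (μ fstar : ℝ) (hμ : 0 < μ)
    (hgrad : ∀ x, HasGradientAt f (f' x) x)
    (hlb : ∀ x, fstar ≤ f x)
    (Xstar : Set (EuclideanSpace ℝ (Fin d)))
    (hXstar : Xstar = {z | f z = fstar})
    (hpkl : ∀ x, 2 * μ * (f x - fstar) ≤ ‖f' x‖ ^ 2)
    (hflow : ∀ x0 : EuclideanSpace ℝ (Fin d),
      ∃ γ : ℝ → EuclideanSpace ℝ (Fin d), γ 0 = x0 ∧
        (∀ t : ℝ, 0 ≤ t → HasDerivAt γ (-f' (γ t)) t) ∧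
        Tendsto (fun t => infDist (γ t) Xstar) atTop (nhds 0)) :
    ∀ x, μ / 2 * infDist x Xstar ^ 2 ≤ f x - fstar := by
  intro x
  obtain ⟨γ, rfl, hγ, hγX⟩ := hflow x
  set φ := fun t => f (γ t) - fstar
  have hφ : ∀ t, 0 ≤ t → HasDerivAt φ (-‖f' (γ t)‖ ^ 2) t := fun t ht => by
    simpa [φ, inner_neg_right, real_inner_self_eq_norm_sq] using
      ((hgrad (γ t)).comp_hasDerivAt (hγ t ht)).sub_const fstar
  have hs : 0 < √(μ / 2) := Real.sqrt_pos.2 (by positivity)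
  have hdist : infDist (γ 0) Xstar ≤ √(φ 0) / √(μ / 2) := by
    refine infDist_le_of_dist_le_before_zero (HasDerivAt.continuousOn hφ)
      (fun t ht => hXstar ▸ sub_eq_zero.1 ht) hγX fun T hT hne => ?_
    have := sqrt_half_mul_norm_sub_le_sqrt_sub_sqrt hμ.le hT (fun t ht => hγ t ht.1)
      (fun t ht => by rw [norm_neg]; exact hφ t ht.1)
      (fun t ht => (sub_nonneg.2 (hlb _)).lt_of_ne' (hne t ht))
      (fun t _ => by rw [norm_neg]; exact hpkl _)
    rw [dist_comm, dist_eq_norm, le_div_iff₀' hs]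
    linarith [Real.sqrt_nonneg (φ T)]
  rw [le_div_iff₀' hs, Real.le_sqrt (mul_nonneg hs.le infDist_nonneg) (sub_nonneg.2 (hlb _)),
    mul_pow, Real.sq_sqrt (by positivity)] at hdist
  exact hdist

theorem pkl_implies_quadratic_growth {d : ℕ}
    (f : EuclideanSpace ℝ (Fin d) → ℝ)
    (f' : EuclideanSpace ℝ (Fin d) → EuclideanSpace ℝ (Fin d))
    (μ fstar : ℝ) (hμ : 0 < μ)
    (hgrad : ∀ x, HasGradientAt f (f' x) x)
    (hlb : ∀ x, fstar ≤ f x)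
    (Xstar : Set (EuclideanSpace ℝ (Fin d)))
    (hXstar : Xstar = {z | f z = fstar}) (hXne : Xstar.Nonempty)
    (hXcl : IsClosed Xstar)
    (hpkl : ∀ x, 2 * μ * (f x - fstar) ≤ ‖f' x‖ ^ 2)
    (hflow : ∀ x0 : EuclideanSpace ℝ (Fin d),
      ∃ γ : ℝ → EuclideanSpace ℝ (Fin d), γ 0 = x0 ∧
        (∀ t : ℝ, 0 ≤ t → HasDerivAt γ (-f' (γ t)) t) ∧
        Tendsto (fun t => infDist (γ t) Xstar) atTop (nhds 0)) :
    ∀ x, μ / 2 * infDist x Xstar ^ 2 ≤ f x - fstar :=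
  pkl_implies_quadratic_growth_general f f' μ fstar hμ hgrad hlb Xstar hXstar hpkl hflow
end

section
/- Let f : R^d → R be convex and differentiable with L-Lipschitz gradient, and let (x_k) be the gradient descent iterates x_{k+1} = x_k - η∇f(x_k) with 0 < η ≤ 1/L. Then the iterate sequence is self-contracted: for all natural numbers s ≤ t, ‖x_{s+1} - x_t‖ ≤ ‖x_s - x_t‖; equivalently, for s1 ≤ s2 ≤ s3, ‖x_{s3} - x_{s2}‖ ≤ ‖x_{s3} - x_{s1}‖. -/
/-!
With `η ≤ 1 / L` the descent lemma gives `f (x (k+1)) ≤ f (x k) - η / 2 * ‖∇f (x k)‖ ^ 2`, so the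
values `f (x k)` decrease. For `s < t` this gives `f (x t) ≤ f (x (s+1))`, and the gradient
inequality of convexity turns it into `⟪∇f (x s), x s - x t⟫ ≥ η / 2 * ‖∇f (x s)‖ ^ 2`. That is
exactly what makes the expansion
`‖x (s+1) - x t‖² = ‖x s - x t‖² - 2η ⟪∇f (x s), x s - x t⟫ + η² ‖∇f (x s)‖²`
at most `‖x s - x t‖²`; self-contractedness follows by induction on the middle index.
-/

open Set
open scoped RealInnerProductSpace

section

variable {E : Type*} [NormedAddCommGroup E] [InnerProductSpace ℝ E] [CompleteSpace E]
  {f : E → ℝ} {g : E → E} {f' x v y : E} {L η : ℝ}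

theorem HasGradientAt.hasDerivAt_comp_add_smul {t : ℝ} (h : HasGradientAt f f' (x + t • v)) :
    HasDerivAt (fun s : ℝ => f (x + s • v)) ⟪f', v⟫ t := by
  have hline : HasDerivAt (fun s : ℝ => x + s • v) v t := by
    simpa using ((hasDerivAt_id t).smul_const v).const_add x
  have hcomp := h.hasFDerivAt.comp_hasDerivAt t hline
  simp only [InnerProductSpace.toDual_apply_apply] at hcomp
  exact hcomp

theorem ConvexOn.add_inner_gradient_le {s : Set E} (hf : ConvexOn ℝ s f) (hx : x ∈ s) (hy : y ∈ s)
    (h : HasGradientAt f f' x) : f x + ⟪f', y - x⟫ ≤ f y := by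
  have hsegment := hf.comp_affineMap (AffineMap.lineMap x y)
  have hfun : f ∘ AffineMap.lineMap x y = fun t : ℝ => f (x + t • (y - x)) := by
    funext t; simp [AffineMap.lineMap_apply_module', add_comm]
  rw [hfun] at hsegment
  have hderiv : HasDerivAt (fun t : ℝ => f (x + t • (y - x))) ⟪f', y - x⟫ 0 :=
    HasGradientAt.hasDerivAt_comp_add_smul (by simpa using h)
  have := hsegment.le_slope_of_hasDerivAt (x := 0) (y := 1) (by simpa) (by simpa) one_pos hderiv
  simp only [slope_def_field, one_smul, add_sub_cancel, zero_smul, add_zero, sub_zero,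
    div_one] at this
  linarith

theorem le_add_inner_add_sq_of_lipschitz_gradient (hg : ∀ z, HasGradientAt f (g z) z)
    (hlip : ∀ a b, ‖g a - g b‖ ≤ L * ‖a - b‖) (x y : E) :
    f y ≤ f x + ⟪g x, y - x⟫ + L / 2 * ‖y - x‖ ^ 2 := by
  set v := y - x
  let φ : ℝ → ℝ := fun t => f (x + t • v) - t * ⟪g x, v⟫ - L / 2 * t ^ 2 * ‖v‖ ^ 2
  have hφ' : ∀ t, HasDerivAt φ (⟪g (x + t • v), v⟫ - ⟪g x, v⟫ - L * t * ‖v‖ ^ 2) t := by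
    intro t
    refine ((((hg (x + t • v)).hasDerivAt_comp_add_smul).sub
      ((hasDerivAt_id t).mul_const ⟪g x, v⟫)).sub
      (((hasDerivAt_pow 2 t).const_mul (L / 2)).mul_const (‖v‖ ^ 2))).congr_deriv ?_
    ring
  have hφ'_nonpos : ∀ t, 0 ≤ t → ⟪g (x + t • v), v⟫ - ⟪g x, v⟫ - L * t * ‖v‖ ^ 2 ≤ 0 := by
    intro t ht
    refine sub_nonpos.mpr ?_
    calc ⟪g (x + t • v), v⟫ - ⟪g x, v⟫ = ⟪g (x + t • v) - g x, v⟫ := (inner_sub_left ..).symm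
      _ ≤ ‖g (x + t • v) - g x‖ * ‖v‖ := real_inner_le_norm _ _
      _ ≤ L * ‖t • v‖ * ‖v‖ := by
          gcongr
          simpa using hlip (x + t • v) x
      _ = L * t * ‖v‖ ^ 2 := by rw [norm_smul, Real.norm_of_nonneg ht]; ring
  have hanti : AntitoneOn φ (Ici 0) :=
    antitoneOn_of_hasDerivWithinAt_nonpos (convex_Ici 0)
      (HasDerivAt.continuousOn fun t _ => hφ' t) (fun t _ => (hφ' t).hasDerivWithinAt)
      (fun t ht => hφ'_nonpos t (by simpa using (interior_subset ht : t ∈ Ici (0:ℝ))))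
  have := hanti self_mem_Ici (show (1:ℝ) ∈ Ici 0 from mem_Ici.mpr zero_le_one) zero_le_one
  simp only [φ, v, one_smul, add_sub_cancel, one_mul, one_pow, mul_one, zero_smul, add_zero,
    zero_mul, sub_zero] at this
  linarith

theorem le_sub_mul_norm_sq_of_gradient_step (hg : ∀ z, HasGradientAt f (g z) z)
    (hlip : ∀ a b, ‖g a - g b‖ ≤ L * ‖a - b‖) (hη : 0 ≤ η) (hηL : η * L ≤ 1) (x : E) :
    f (x - η • g x) ≤ f x - η / 2 * ‖g x‖ ^ 2 := by
  have h := le_add_inner_add_sq_of_lipschitz_gradient hg hlip x (x - η • g x)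
  rw [sub_sub_cancel_left, inner_neg_right, real_inner_smul_right, real_inner_self_eq_norm_sq,
    norm_neg, norm_smul, Real.norm_of_nonneg hη] at h
  nlinarith [mul_nonneg (mul_nonneg hη (sq_nonneg ‖g x‖)) (sub_nonneg.mpr hηL)]

theorem norm_gradient_step_sub_le (hf : ConvexOn ℝ univ f) (hg : ∀ z, HasGradientAt f (g z) z)
    (hlip : ∀ a b, ‖g a - g b‖ ≤ L * ‖a - b‖) (hη : 0 ≤ η) (hηL : η * L ≤ 1)
    (hy : f y ≤ f (x - η • g x)) : ‖x - η • g x - y‖ ≤ ‖x - y‖ := by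
  have hdecrease := le_sub_mul_norm_sq_of_gradient_step hg hlip hη hηL x
  have hsupport := hf.add_inner_gradient_le (mem_univ x) (mem_univ y) (hg x)
  have hinner : η / 2 * ‖g x‖ ^ 2 ≤ ⟪g x, x - y⟫ := by
    rw [← neg_sub x y, inner_neg_right] at hsupport
    linarith
  have hexpand : ‖x - η • g x - y‖ ^ 2 =
      ‖x - y‖ ^ 2 - 2 * η * ⟪g x, x - y⟫ + η ^ 2 * ‖g x‖ ^ 2 := by
    rw [sub_right_comm, norm_sub_sq_real, real_inner_smul_right, norm_smul,
      Real.norm_of_nonneg hη, real_inner_comm]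
    ring
  refine (sq_le_sq₀ (norm_nonneg _) (norm_nonneg _)).mp ?_
  nlinarith [mul_le_mul_of_nonneg_left hinner hη]

end

theorem norm_sub_le_of_forall_norm_succ_sub_le {X : Type*} [SeminormedAddCommGroup X]
    {x : ℕ → X} (h : ∀ s t, s < t → ‖x (s + 1) - x t‖ ≤ ‖x s - x t‖) {s₁ s₂ s₃ : ℕ}
    (h₁₂ : s₁ ≤ s₂) (h₂₃ : s₂ ≤ s₃) : ‖x s₃ - x s₂‖ ≤ ‖x s₃ - x s₁‖ := by
  induction s₂, h₁₂ using Nat.le_induction with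
  | base => exact le_rfl
  | succ s h₁ ih =>
    calc ‖x s₃ - x (s + 1)‖ = ‖x (s + 1) - x s₃‖ := norm_sub_rev _ _
      _ ≤ ‖x s - x s₃‖ := h s s₃ h₂₃
      _ = ‖x s₃ - x s‖ := norm_sub_rev _ _
      _ ≤ ‖x s₃ - x s₁‖ := ih (Nat.le_of_succ_le h₂₃)

theorem gd_self_contracted_general {d : ℕ}
    (f : EuclideanSpace ℝ (Fin d) → ℝ)
    (f' : EuclideanSpace ℝ (Fin d) → EuclideanSpace ℝ (Fin d))
    (L η : ℝ)
    (hconv : ConvexOn ℝ Set.univ f)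
    (hgrad : ∀ x, HasGradientAt f (f' x) x)
    (hlip : ∀ x y, ‖f' x - f' y‖ ≤ L * ‖x - y‖)
    (hη0 : 0 < η) (hη : η ≤ 1 / L)
    (x : ℕ → EuclideanSpace ℝ (Fin d))
    (hx : ∀ k : ℕ, x (k + 1) = x k - η • f' (x k)) :
    ∀ s1 s2 s3 : ℕ, s1 ≤ s2 → s2 ≤ s3 →
      ‖x s3 - x s2‖ ≤ ‖x s3 - x s1‖ := by
  have hL : 0 < L := one_div_pos.mp (hη0.trans_le hη)
  have hηL : η * L ≤ 1 := (le_div_iff₀ hL).mp hη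
  have hvalues : Antitone (f ∘ x) := antitone_nat_of_succ_le fun k => by
    simpa only [Function.comp_apply, hx k] using
      (le_sub_mul_norm_sq_of_gradient_step hgrad hlip hη0.le hηL (x k)).trans
        (sub_le_self _ (by positivity))
  intro s₁ s₂ s₃
  refine norm_sub_le_of_forall_norm_succ_sub_le fun s t hst => ?_
  rw [hx s]
  exact norm_gradient_step_sub_le hconv hgrad hlip hη0.le hηL (hx s ▸ hvalues hst)

theorem gd_self_contracted {d : ℕ}
    (f : EuclideanSpace ℝ (Fin d) → ℝ)
    (f' : EuclideanSpace ℝ (Fin d) → EuclideanSpace ℝ (Fin d))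
    (L η : ℝ) (hL : 0 < L)
    (hconv : ConvexOn ℝ Set.univ f)
    (hgrad : ∀ x, HasGradientAt f (f' x) x)
    (hlip : ∀ x y, ‖f' x - f' y‖ ≤ L * ‖x - y‖)
    (hη0 : 0 < η) (hη : η ≤ 1 / L)
    (x : ℕ → EuclideanSpace ℝ (Fin d))
    (hx : ∀ k : ℕ, x (k + 1) = x k - η • f' (x k)) :
    ∀ s1 s2 s3 : ℕ, s1 ≤ s2 → s2 ≤ s3 →
      ‖x s3 - x s2‖ ≤ ‖x s3 - x s1‖ :=
  gd_self_contracted_general f f' L η hconv hgrad hlip hη0 hη x hx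
end

section
/- Let g_1, ..., g_d : R → R be differentiable quasiconvex functions, each with L-Lipschitz derivative and each attaining its minimum, and let f(x) = Σ_i g_i(x_i). Then for gradient descent on f with step size η ≤ 1/L started at x_0, the path length satisfies Σ_{k=0}^∞ ‖x_k - x_{k+1}‖ ≤ √d · ‖x_0 - x*‖, where x* is the coordinatewise closest minimizer (x*_i is the minimizer of g_i closest to (x_0)_i). -/
/-! Each coordinate of gradient descent on `f = ∑ i, gᵢ (xᵢ)` is one-dimensional gradient descent
on `gᵢ`. As `gᵢ'` vanishes at the minimizer `zᵢ` and is `L`-Lipschitz, a step has length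
`η |gᵢ' a| ≤ |a - zᵢ|`, and quasiconvexity makes it point towards `zᵢ`; so every iterate lies
between its predecessor and `zᵢ`, and the path length of the coordinate telescopes to at most
`|x₀ᵢ - zᵢ|`. Bounding each step by its `ℓ¹`-norm and then `‖x₀ - z‖₁ ≤ √d ‖x₀ - z‖₂` gives the
claim. -/

open ENNReal Set Finset

lemma sum_range_dist_le_of_mem_segment {E : Type*} [NormedAddCommGroup E] [NormedSpace ℝ E]
    {u : ℕ → E} {z : E} (hu : ∀ k, u (k + 1) ∈ segment ℝ (u k) z) (N : ℕ) :
    ∑ k ∈ range N, dist (u k) (u (k + 1)) ≤ dist (u 0) z := by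
  suffices h : ∑ k ∈ range N, dist (u k) (u (k + 1)) + dist (u N) z = dist (u 0) z by
    linarith [dist_nonneg (x := u N) (y := z)]
  induction N with
  | zero => simp
  | succ N ih => rw [sum_range_succ, add_assoc, dist_add_dist_of_mem_segment (hu N), ih]

lemma sub_mem_uIcc_of_abs_le_of_mul_nonpos {a z s : ℝ} (hs : |s| ≤ |a - z|)
    (hdir : s * (z - a) ≤ 0) : a - s ∈ uIcc a z := by
  rw [Set.mem_uIcc]
  rcases le_total a z with h | h
  · rw [abs_of_nonpos (sub_nonpos.2 h)] at hs
    left; constructor <;> nlinarith [neg_abs_le s, le_abs_self s]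
  · rw [abs_of_nonneg (sub_nonneg.2 h)] at hs
    right; constructor <;> nlinarith [neg_abs_le s, le_abs_self s]

section GradientStep

variable {g g' : ℝ → ℝ} {L η z : ℝ}

lemma abs_mul_le_of_lipschitz_of_eq_zero (hL : 0 < L) (hη0 : 0 ≤ η) (hη : η ≤ 1 / L) {a : ℝ}
    (hlip : |g' a - g' z| ≤ L * |a - z|) (hz : g' z = 0) : |η * g' a| ≤ |a - z| := by
  rw [hz, sub_zero] at hlip
  calc |η * g' a| = η * |g' a| := by rw [abs_mul, abs_of_nonneg hη0]
    _ ≤ 1 / L * (L * |a - z|) := mul_le_mul hη hlip (abs_nonneg _) (by positivity)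
    _ = |a - z| := by field_simp

lemma gradient_step_mem_uIcc (hL : 0 < L) (hη0 : 0 ≤ η) (hη : η ≤ 1 / L)
    (hderiv : HasDerivAt g (g' z) z) (hqc : ∀ a b, g b ≤ g a → g' a * (b - a) ≤ 0)
    (hlip : ∀ a b, |g' a - g' b| ≤ L * |a - b|) (hmin : ∀ t, g z ≤ g t) (a : ℝ) :
    a - η * g' a ∈ uIcc a z := by
  have hz : g' z = 0 := IsLocalMin.hasDerivAt_eq_zero (.of_forall hmin) hderiv
  refine sub_mem_uIcc_of_abs_le_of_mul_nonpos
    (abs_mul_le_of_lipschitz_of_eq_zero hL hη0 hη (hlip a z) hz) ?_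
  rw [mul_assoc]
  exact mul_nonpos_of_nonneg_of_nonpos hη0 (hqc a z (hmin a))

end GradientStep

namespace EuclideanSpace

variable {ι : Type*} [Fintype ι]

lemma norm_le_sum_abs (v : EuclideanSpace ℝ ι) : ‖v‖ ≤ ∑ i, |v i| := by
  rw [EuclideanSpace.norm_eq, Real.sqrt_le_left (sum_nonneg fun i _ => abs_nonneg _)]
  simpa only [Real.norm_eq_abs] using sum_sq_le_sq_sum_of_nonneg fun i _ => abs_nonneg (v i)

lemma sum_abs_le_sqrt_card_mul_norm (v : EuclideanSpace ℝ ι) :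
    ∑ i, |v i| ≤ √(Fintype.card ι) * ‖v‖ := by
  have h := Real.sum_mul_le_sqrt_mul_sqrt univ (fun i => |v i|) 1
  simp only [Pi.one_apply, mul_one, one_pow, sum_const, card_univ, nsmul_eq_mul, sq_abs] at h
  simpa only [EuclideanSpace.norm_eq, Real.norm_eq_abs, sq_abs, mul_comm] using h

end EuclideanSpace

theorem separable_quasiconvex_gd_path_length_general {d : ℕ}
    (g : Fin d → ℝ → ℝ) (g' : Fin d → ℝ → ℝ)
    (L η : ℝ) (hL : 0 < L)
    (hderiv : ∀ i t, HasDerivAt (g i) (g' i t) t)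
    (hqc : ∀ i (a b : ℝ), g i b ≤ g i a → g' i a * (b - a) ≤ 0)
    (hlip : ∀ i (a b : ℝ), |g' i a - g' i b| ≤ L * |a - b|)
    (hη0 : 0 < η) (hη : η ≤ 1 / L)
    (xstar : EuclideanSpace ℝ (Fin d))
    (hmin : ∀ i, ∀ t : ℝ, g i (xstar i) ≤ g i t)
    (x : ℕ → EuclideanSpace ℝ (Fin d))
    (hx : ∀ (k : ℕ) (i : Fin d), x (k + 1) i = x k i - η * g' i (x k i)) :
    ∑' k : ℕ, (‖x k - x (k + 1)‖₊ : ℝ≥0∞) ≤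
      ENNReal.ofReal (Real.sqrt d * ‖x 0 - xstar‖) := by
  have hcoord (i : Fin d) (N : ℕ) :
      ∑ k ∈ range N, |x k i - x (k + 1) i| ≤ |x 0 i - xstar i| := by
    refine sum_range_dist_le_of_mem_segment (u := fun k => x k i) (fun k => ?_) N
    rw [segment_eq_uIcc, hx]
    exact gradient_step_mem_uIcc hL hη0.le hη (hderiv i _) (hqc i) (hlip i) (hmin i) _
  refine ENNReal.tsum_le_of_sum_range_le fun N => ?_
  simp only [← enorm_eq_nnnorm, ← ofReal_norm]
  rw [← ENNReal.ofReal_sum_of_nonneg fun k _ => norm_nonneg _]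
  refine ENNReal.ofReal_le_ofReal ?_
  calc ∑ k ∈ range N, ‖x k - x (k + 1)‖
      ≤ ∑ k ∈ range N, ∑ i, |x k i - x (k + 1) i| :=
        sum_le_sum fun k _ => EuclideanSpace.norm_le_sum_abs _
    _ = ∑ i, ∑ k ∈ range N, |x k i - x (k + 1) i| := sum_comm
    _ ≤ ∑ i, |x 0 i - xstar i| := sum_le_sum fun i _ => hcoord i N
    _ ≤ √d * ‖x 0 - xstar‖ := by
        simpa using EuclideanSpace.sum_abs_le_sqrt_card_mul_norm (x 0 - xstar)

theorem separable_quasiconvex_gd_path_length {d : ℕ}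
    (g : Fin d → ℝ → ℝ) (g' : Fin d → ℝ → ℝ)
    (L η : ℝ) (hL : 0 < L)
    (hderiv : ∀ i t, HasDerivAt (g i) (g' i t) t)
    (hqc : ∀ i (a b : ℝ), g i b ≤ g i a → g' i a * (b - a) ≤ 0)
    (hlip : ∀ i (a b : ℝ), |g' i a - g' i b| ≤ L * |a - b|)
    (hη0 : 0 < η) (hη : η ≤ 1 / L)
    (xstar : EuclideanSpace ℝ (Fin d))
    (hmin : ∀ i, ∀ t : ℝ, g i (xstar i) ≤ g i t)
    (x : ℕ → EuclideanSpace ℝ (Fin d))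
    (hclosest : ∀ i, ∀ z : ℝ, (∀ t : ℝ, g i z ≤ g i t) →
      |x 0 i - xstar i| ≤ |x 0 i - z|)
    (hx : ∀ (k : ℕ) (i : Fin d), x (k + 1) i = x k i - η * g' i (x k i)) :
    ∑' k : ℕ, (‖x k - x (k + 1)‖₊ : ℝ≥0∞) ≤
      ENNReal.ofReal (Real.sqrt d * ‖x 0 - xstar‖) :=
  separable_quasiconvex_gd_path_length_general g g' L η hL hderiv hqc hlip hη0 hη xstar hmin x hx
end

section
/- For all real x ≥ 1, the inequality x^{-1/(x-1)} · (1 - 1/x) ≤ (log x)/e holds (where the left side at x = 1 is interpreted as its limit 0). -/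
/-!
Put `r = log x / (x - 1)`. Since `x ^ (-1 / (x - 1)) = exp (-r)` and `log x = r (x - 1)`, the
inequality for `x > 1` is equivalent to `exp (1 - r) ≤ r x`, i.e. to `logGap x ≥ 0` where
`logGap x = log r + r + log x - 1`. As `x → 1⁺` we have `r → 1`, so `logGap x → 0`, and
`logGap' x = 1 / (x log x) - log x / (x - 1) ^ 2`, which is nonnegative because
`log x ≤ (x - 1) / √x`, i.e. `log y ≤ sinh (log y)` for `y = √x`. Hence `logGap` is monotone
on `(1, ∞)` and nonnegative there.
-/

open Real Filter Topology Set

lemma Real.sq_le_sinh_sq (s : ℝ) : s ^ 2 ≤ sinh s ^ 2 := by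
  rw [← sq_abs s, ← sq_abs (sinh s), abs_sinh]
  exact pow_le_pow_left₀ (abs_nonneg s) (self_le_sinh_iff.mpr (abs_nonneg s)) 2

lemma Real.mul_log_sq_le_sub_one_sq {x : ℝ} (hx : 0 < x) : x * log x ^ 2 ≤ (x - 1) ^ 2 := by
  have hsqrt : 0 < √x := sqrt_pos.mpr hx
  have h := sq_le_sinh_sq (log √x)
  rw [sinh_log hsqrt, log_sqrt hx.le] at h
  calc x * log x ^ 2 = 4 * x * (log x / 2) ^ 2 := by ring
    _ ≤ 4 * x * ((√x - (√x)⁻¹) / 2) ^ 2 := by gcongr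
    _ = (x - 1) ^ 2 := by
      field_simp
      rw [sq_sqrt hx.le]
      ring

lemma Real.tendsto_log_div_sub_one : Tendsto (fun x ↦ log x / (x - 1)) (𝓝[≠] 1) (𝓝 1) := by
  have h := hasDerivAt_iff_tendsto_slope.mp (hasDerivAt_log one_ne_zero)
  simpa [slope_fun_def_field] using h

noncomputable def logGap (x : ℝ) : ℝ := log (log x / (x - 1)) + log x / (x - 1) + log x - 1

lemma hasDerivAt_logGap {x : ℝ} (hx : 1 < x) :
    HasDerivAt logGap (1 / (x * log x) - log x / (x - 1) ^ 2) x := by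
  have hx0 : x ≠ 0 := by positivity
  have hx1 : x - 1 ≠ 0 := by linarith
  have hlog : log x ≠ 0 := (log_pos hx).ne'
  have hslope : HasDerivAt (fun y ↦ log y / (y - 1)) ((x⁻¹ * (x - 1) - log x) / (x - 1) ^ 2) x := by
    exact ((hasDerivAt_log hx0).div ((hasDerivAt_id' x).sub_const 1) hx1).congr_deriv (by ring)
  refine ((((hslope.log (div_ne_zero hlog hx1)).add hslope).add (hasDerivAt_log hx0)).sub_const
    1).congr_deriv ?_
  field_simp
  ring

lemma monotoneOn_logGap : MonotoneOn logGap (Ioi 1) := by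
  refine monotoneOn_of_hasDerivWithinAt_nonneg (convex_Ioi 1)
    (fun x hx ↦ (hasDerivAt_logGap hx).continuousAt.continuousWithinAt)
    (by rw [interior_Ioi]; exact fun x hx ↦ (hasDerivAt_logGap hx).hasDerivWithinAt) ?_
  rw [interior_Ioi]
  intro x (hx : 1 < x)
  have hx0 : 0 < x := by linarith
  have hlog : 0 < log x := log_pos hx
  have hx1 : 0 < x - 1 := by linarith
  rw [sub_nonneg, div_le_div_iff₀ (by positivity) (by positivity)]
  nlinarith [mul_log_sq_le_sub_one_sq hx0]

lemma tendsto_logGap : Tendsto logGap (𝓝[>] 1) (𝓝 0) := by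
  have hslope := tendsto_log_div_sub_one.mono_left (nhdsGT_le_nhdsNE 1)
  have hlog : Tendsto log (𝓝[>] 1) (𝓝 0) := by
    simpa using (continuousAt_log one_ne_zero).tendsto.mono_left nhdsWithin_le_nhds
  convert (((hslope.log one_ne_zero).add hslope).add hlog).sub_const 1 using 2
  · rfl
  · norm_num

lemma logGap_nonneg {x : ℝ} (hx : 1 < x) : 0 ≤ logGap x := by
  refine le_of_tendsto tendsto_logGap ?_
  filter_upwards [Ioo_mem_nhdsGT hx] with y hy
  exact monotoneOn_logGap (mem_Ioi.mpr hy.1) (mem_Ioi.mpr hx) hy.2.le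

lemma exp_one_sub_log_div_sub_one_le {x : ℝ} (hx : 1 < x) :
    exp (1 - log x / (x - 1)) ≤ log x / (x - 1) * x := by
  have hslope : 0 < log x / (x - 1) := div_pos (log_pos hx) (by linarith)
  rw [← le_log_iff_exp_le (by positivity), log_mul hslope.ne' (by positivity)]
  have := logGap_nonneg hx
  rw [logGap] at this
  linarith

theorem rpow_ineq_log_div_e (x : ℝ) (hx : 1 ≤ x) :
    x ^ (-(1 / (x - 1))) * (1 - 1 / x) ≤ Real.log x / Real.exp 1 := by
  rcases hx.eq_or_lt with rfl | hx
  · simp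
  set r := log x / (x - 1) with hr
  have hx0 : 0 < x := by linarith
  have hr0 : 0 < r := div_pos (log_pos hx) (by linarith)
  calc x ^ (-(1 / (x - 1))) * (1 - 1 / x) = exp (1 - r) / (r * x) * (log x / exp 1) := by
        have hL : log x = r * (x - 1) := by rw [hr]; field_simp
        rw [rpow_def_of_pos hx0, show log x * -(1 / (x - 1)) = -r by ring,
          show (1 : ℝ) - r = 1 + -r by ring, exp_add, hL]
        field_simp
    _ ≤ 1 * (log x / exp 1) := by
        refine mul_le_mul_of_nonneg_right ?_ (div_nonneg (log_nonneg hx.le) (exp_pos 1).le)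
        exact div_le_one_of_le₀ (exp_one_sub_log_div_sub_one_le hx) (by positivity)
    _ = log x / exp 1 := one_mul _
end

section
/- Let σ_1 ≥ ... ≥ σ_m > 0 with condition number κ = σ_1/σ_m, and α ∈ R^m. Then ∫_0^∞ √(Σ_{i=1}^m e^{-2tσ_i} σ_i² α_i²) dt ≤ (1 + 2.5√(log κ)) · ‖α‖₂. -/
/-!
If `σᵢ ∈ [l, u]` on a set of indices, then `exp (-2 t σᵢ) σᵢ² ≤ (u exp (-l t))²` there, so that
band of the spectrum contributes at most `(u / l) ‖α_band‖` to the path length. Cutting the spectrum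
into the dyadic bands `σ₀ / 2 ^ (k + 1) < σᵢ ≤ σ₀ / 2 ^ k`, `k ≤ n = ⌊log₂ κ⌋`, every band
has `u / l ≤ 2` and the last one `u / l ≤ r := κ / 2 ^ n ∈ [1, 2]`. The triangle inequality over
the bands and Cauchy–Schwarz bound the path length by `√(4 n + r²) ‖α‖`, and
`4 n + r² ≤ (1 + 2.5 √(log κ))²` because `log κ = n log 2 + log r`, `6.25 log 2 ≥ 4` and
`r² - 1 ≤ 6 log r`.
-/

open MeasureTheory ENNReal Finset Real

lemma lintegral_Ioi_ofReal_mul_exp_neg_mul (C : ℝ) {l : ℝ} (hl : 0 < l) :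
    ∫⁻ t in Set.Ioi 0, ENNReal.ofReal (C * exp (-l * t)) = ENNReal.ofReal (C / l) := by
  have hint : IntegrableOn (fun t => exp (-l * t)) (Set.Ioi 0) :=
    integrableOn_exp_mul_Ioi (neg_neg_of_pos hl) 0
  simp_rw [ENNReal.ofReal_mul' (exp_nonneg _)]
  rw [lintegral_const_mul _ (by fun_prop), ← ofReal_integral_eq_lintegral_ofReal hint
    (Filter.Eventually.of_forall fun t => (exp_pos _).le), integral_exp_mul_Ioi (neg_neg_of_pos hl),
    div_eq_mul_inv C, ENNReal.ofReal_mul' (inv_nonneg.2 hl.le)]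
  simp

lemma Real.sqrt_add_le_add_sqrt {a b : ℝ} (ha : 0 ≤ a) (hb : 0 ≤ b) : √(a + b) ≤ √a + √b := by
  rw [sqrt_le_left (by positivity)]
  nlinarith [sq_sqrt ha, sq_sqrt hb, sqrt_nonneg a, sqrt_nonneg b]

lemma Real.sqrt_sum_le_sum_sqrt {ι : Type*} (s : Finset ι) (f : ι → ℝ) (hf : ∀ i ∈ s, 0 ≤ f i) :
    √(∑ i ∈ s, f i) ≤ ∑ i ∈ s, √(f i) := by
  induction s using Finset.cons_induction with
  | empty => simp
  | cons a s _ ih =>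
    rw [sum_cons, sum_cons]
    have hf' : ∀ i ∈ s, 0 ≤ f i := fun i hi => hf i (mem_cons_of_mem hi)
    calc √(f a + ∑ i ∈ s, f i) ≤ √(f a) + √(∑ i ∈ s, f i) :=
          sqrt_add_le_add_sqrt (hf a (mem_cons_self a s)) (sum_nonneg hf')
      _ ≤ √(f a) + ∑ i ∈ s, √(f i) := by gcongr; exact ih hf'

section GradientFlow

variable {ι : Type*} (σ α : ι → ℝ)

/-- `‖ẋ(t)‖` for the gradient flow `ẋ = -Σ x`, `x(0) = α`, of a quadratic with eigenvalues `σᵢ`,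
restricted to the eigen-coordinates in `s`. -/
noncomputable def gfSpeed (s : Finset ι) (t : ℝ) : ℝ :=
  √(∑ i ∈ s, exp (-2 * t * σ i) * σ i ^ 2 * α i ^ 2)

lemma gfSpeed_nonneg (s : Finset ι) (t : ℝ) : 0 ≤ gfSpeed σ α s t :=
  sqrt_nonneg _

lemma continuous_gfSpeed (s : Finset ι) : Continuous (gfSpeed σ α s) := by
  unfold gfSpeed; fun_prop

variable {σ}

lemma gfSpeed_le_of_mem_Icc {s : Finset ι} {l u t : ℝ} (hσ : ∀ i ∈ s, σ i ∈ Set.Icc l u)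
    (hl : 0 ≤ l) (ht : 0 ≤ t) :
    gfSpeed σ α s t ≤ u * √(∑ i ∈ s, α i ^ 2) * exp (-l * t) := by
  rcases s.eq_empty_or_nonempty with rfl | ⟨j, hj⟩
  · simp [gfSpeed]
  have hu : 0 ≤ u := hl.trans ((hσ j hj).1.trans (hσ j hj).2)
  have hterm : ∀ i ∈ s,
      exp (-2 * t * σ i) * σ i ^ 2 * α i ^ 2 ≤ (u * exp (-l * t)) ^ 2 * α i ^ 2 := by
    intro i hi
    obtain ⟨hli, hiu⟩ := hσ i hi
    have hexp : exp (-2 * t * σ i) ≤ exp (-l * t) ^ 2 := by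
      rw [← exp_nat_mul]; exact exp_le_exp.2 (by push_cast; nlinarith)
    have hσi : σ i ^ 2 ≤ u ^ 2 := pow_le_pow_left₀ (hl.trans hli) hiu 2
    gcongr
    calc exp (-2 * t * σ i) * σ i ^ 2 ≤ exp (-l * t) ^ 2 * u ^ 2 := by gcongr
      _ = (u * exp (-l * t)) ^ 2 := by ring
  calc gfSpeed σ α s t ≤ √((u * exp (-l * t)) ^ 2 * ∑ i ∈ s, α i ^ 2) :=
        sqrt_le_sqrt (by rw [mul_sum]; exact sum_le_sum hterm)
    _ = u * √(∑ i ∈ s, α i ^ 2) * exp (-l * t) := by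
        rw [sqrt_mul (sq_nonneg _), sqrt_sq (by positivity)]; ring

lemma lintegral_gfSpeed_le_of_mem_Icc {s : Finset ι} {l u : ℝ} (hσ : ∀ i ∈ s, σ i ∈ Set.Icc l u)
    (hl : 0 < l) :
    ∫⁻ t in Set.Ioi 0, ENNReal.ofReal (gfSpeed σ α s t) ≤
      ENNReal.ofReal (u / l * √(∑ i ∈ s, α i ^ 2)) :=
  calc ∫⁻ t in Set.Ioi 0, ENNReal.ofReal (gfSpeed σ α s t)
      ≤ ∫⁻ t in Set.Ioi 0, ENNReal.ofReal (u * √(∑ i ∈ s, α i ^ 2) * exp (-l * t)) :=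
        setLIntegral_mono (by fun_prop) fun t ht =>
          ENNReal.ofReal_le_ofReal (gfSpeed_le_of_mem_Icc α hσ hl.le (le_of_lt ht))
    _ = ENNReal.ofReal (u / l * √(∑ i ∈ s, α i ^ 2)) := by
        rw [lintegral_Ioi_ofReal_mul_exp_neg_mul _ hl, div_mul_eq_mul_div]

lemma gfSpeed_le_sum_fiberwise {β : Type*} [DecidableEq β] {s : Finset ι} {K : Finset β}
    {b : ι → β} (hb : ∀ i ∈ s, b i ∈ K) (t : ℝ) :
    gfSpeed σ α s t ≤ ∑ k ∈ K, gfSpeed σ α {i ∈ s | b i = k} t := by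
  unfold gfSpeed
  rw [← sum_fiberwise_of_maps_to hb]
  exact sqrt_sum_le_sum_sqrt _ _ fun k _ => sum_nonneg fun i _ => by positivity

lemma lintegral_gfSpeed_le_of_bands {β : Type*} [DecidableEq β] {s : Finset ι} {K : Finset β}
    {b : ι → β} (hb : ∀ i ∈ s, b i ∈ K) {l u : β → ℝ} (hl : ∀ k ∈ K, 0 < l k)
    (hσ : ∀ i ∈ s, σ i ∈ Set.Icc (l (b i)) (u (b i))) :
    ∫⁻ t in Set.Ioi 0, ENNReal.ofReal (gfSpeed σ α s t) ≤
      ENNReal.ofReal (√(∑ k ∈ K, (u k / l k) ^ 2) * √(∑ i ∈ s, α i ^ 2)) := by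
  set A : β → ℝ := fun k => √(∑ i ∈ s with b i = k, α i ^ 2)
  have hA : ∑ k ∈ K, A k ^ 2 = ∑ i ∈ s, α i ^ 2 := by
    simp only [A, sq_sqrt (sum_nonneg fun i _ => sq_nonneg (α i))]
    exact sum_fiberwise_of_maps_to hb _
  have hband : ∀ k ∈ K, ∫⁻ t in Set.Ioi 0, ENNReal.ofReal (gfSpeed σ α {i ∈ s | b i = k} t) ≤
      ENNReal.ofReal (|u k / l k| * A k) := fun k hk =>
    (lintegral_gfSpeed_le_of_mem_Icc α (u := u k) (fun i hi => by
      obtain ⟨his, rfl⟩ := mem_filter.1 hi; exact hσ i his) (hl k hk)).trans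
      (ENNReal.ofReal_le_ofReal (by gcongr; exact le_abs_self _))
  calc ∫⁻ t in Set.Ioi 0, ENNReal.ofReal (gfSpeed σ α s t)
      ≤ ∫⁻ t in Set.Ioi 0, ∑ k ∈ K, ENNReal.ofReal (gfSpeed σ α {i ∈ s | b i = k} t) :=
        lintegral_mono fun t => by
          rw [← ENNReal.ofReal_sum_of_nonneg fun k _ => gfSpeed_nonneg σ α _ t]
          exact ENNReal.ofReal_le_ofReal (gfSpeed_le_sum_fiberwise α hb t)
    _ = ∑ k ∈ K, ∫⁻ t in Set.Ioi 0, ENNReal.ofReal (gfSpeed σ α {i ∈ s | b i = k} t) :=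
        lintegral_finsetSum _ fun k _ => (continuous_gfSpeed σ α _).measurable.ennreal_ofReal
    _ ≤ ∑ k ∈ K, ENNReal.ofReal (|u k / l k| * A k) := sum_le_sum hband
    _ = ENNReal.ofReal (∑ k ∈ K, |u k / l k| * A k) :=
        (ENNReal.ofReal_sum_of_nonneg fun k _ => by positivity).symm
    _ ≤ ENNReal.ofReal (√(∑ k ∈ K, (u k / l k) ^ 2) * √(∑ i ∈ s, α i ^ 2)) := by
        gcongr
        simpa only [sq_abs, hA] using sum_mul_le_sqrt_mul_sqrt K (fun k => |u k / l k|) A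

end GradientFlow

lemma sq_sub_one_le_six_mul_log {r : ℝ} (hr₁ : 1 ≤ r) (hr₂ : r ≤ 2) : r ^ 2 - 1 ≤ 6 * log r := by
  have hr : 0 < r := by linarith
  have h : r - 1 ≤ r * log r := by
    have := mul_le_mul_of_nonneg_left (one_sub_inv_le_log_of_pos hr) hr.le
    rwa [mul_sub, mul_one, mul_inv_cancel₀ hr.ne'] at this
  nlinarith [log_nonneg hr₁]

lemma sqrt_four_mul_add_sq_div_pow_le {n : ℕ} {κ : ℝ} (h₁ : 2 ^ n ≤ κ) (h₂ : κ ≤ 2 ^ (n + 1)) :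
    √(4 * n + (κ / 2 ^ n) ^ 2) ≤ 1 + 2.5 * √(log κ) := by
  have h2n : (0 : ℝ) < 2 ^ n := by positivity
  set r := κ / 2 ^ n
  have hr₁ : 1 ≤ r := (one_le_div h2n).2 h₁
  have hr₂ : r ≤ 2 := (div_le_iff₀ h2n).2 (by rw [← pow_succ']; exact h₂)
  have hlogκ : log κ = n * Real.log 2 + log r := by
    rw [← Real.log_pow, ← log_mul h2n.ne' (by positivity), mul_div_cancel₀ _ h2n.ne']
  have hlogr₀ : 0 ≤ log r := log_nonneg hr₁
  have hlogr₁ : log r ≤ 1 :=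
    (log_le_log (by positivity) hr₂).trans (log_two_lt_d9.le.trans (by norm_num))
  have hlogr_le : log r ≤ √(log κ) := by
    calc log r = √(log r) * √(log r) := (mul_self_sqrt hlogr₀).symm
      _ ≤ √(log r) := mul_le_of_le_one_left (sqrt_nonneg _) (sqrt_le_one.mpr hlogr₁)
      _ ≤ √(log κ) := sqrt_le_sqrt (by rw [hlogκ]; nlinarith [Real.log_pos one_lt_two])
  have hS : √(log κ) ^ 2 = n * Real.log 2 + log r := by
    rw [sq_sqrt (log_nonneg ((one_le_pow₀ one_le_two).trans h₁)), hlogκ]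
  rw [sqrt_le_left (by positivity)]
  nlinarith [sq_sub_one_le_six_mul_log hr₁ hr₂, log_two_gt_d9, Nat.cast_nonneg (α := ℝ) n]

lemma sum_sq_div_max_dyadic_le {a b : ℝ} (ha : 0 < a) (hb : 0 < b) (n : ℕ) :
    ∑ k ∈ range (n + 1), (a / 2 ^ k / max (a / 2 ^ (k + 1)) b) ^ 2 ≤
      4 * n + (a / b / 2 ^ n) ^ 2 := by
  have hmax : ∀ k : ℕ, 0 < max (a / 2 ^ (k + 1)) b := fun k => lt_max_of_lt_right hb
  have htwo : ∀ k : ℕ, a / 2 ^ k / max (a / 2 ^ (k + 1)) b ≤ 2 := fun k => by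
    rw [div_le_iff₀ (hmax k)]
    calc a / 2 ^ k = 2 * (a / 2 ^ (k + 1)) := by rw [pow_succ]; field_simp
      _ ≤ 2 * max (a / 2 ^ (k + 1)) b := by gcongr; exact le_max_left _ _
  have hlast : a / 2 ^ n / max (a / 2 ^ (n + 1)) b ≤ a / b / 2 ^ n := by
    rw [div_right_comm a b]
    exact div_le_div_of_nonneg_left (by positivity) hb (le_max_right _ _)
  rw [sum_range_succ]
  gcongr ?_ + ?_
  · calc ∑ k ∈ range n, (a / 2 ^ k / max (a / 2 ^ (k + 1)) b) ^ 2 ≤ ∑ _k ∈ range n, (2 : ℝ) ^ 2 :=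
          sum_le_sum fun k _ =>
            pow_le_pow_left₀ (div_nonneg (by positivity) (hmax k).le) (htwo k) 2
      _ = 4 * n := by simp; ring
  · exact pow_le_pow_left₀ (div_nonneg (by positivity) (hmax n).le) hlast 2

lemma mem_Icc_dyadic_band {σ σ₀ σₘ : ℝ} {k : ℕ} (hσ : 0 < σ) (hσₘ : σₘ ≤ σ)
    (hk₁ : 2 ^ k ≤ σ₀ / σ) (hk₂ : σ₀ / σ < 2 ^ (k + 1)) :
    σ ∈ Set.Icc (max (σ₀ / 2 ^ (k + 1)) σₘ) (σ₀ / 2 ^ k) := by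
  rw [le_div_iff₀ hσ] at hk₁
  rw [div_lt_iff₀ hσ] at hk₂
  refine ⟨max_le ((div_le_iff₀ (by positivity)).2 ?_) hσₘ, (le_div_iff₀ (by positivity)).2 ?_⟩ <;>
    linarith

theorem quadratic_gf_path_length_sqrt_log_kappa {m : ℕ}
    (σ α : Fin (m + 1) → ℝ)
    (hσpos : ∀ i, 0 < σ i)
    (hσmono : ∀ i j : Fin (m + 1), i ≤ j → σ j ≤ σ i)
    (κ : ℝ) (hκ : κ = σ 0 / σ (Fin.last m)) :
    ∫⁻ t in Set.Ioi (0 : ℝ),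
        ENNReal.ofReal (Real.sqrt (∑ i, Real.exp (-2 * t * σ i) * σ i ^ 2 * α i ^ 2)) ≤
      ENNReal.ofReal ((1 + 2.5 * Real.sqrt (Real.log κ)) * Real.sqrt (∑ i, α i ^ 2)) := by
  have hσ₀ := hσpos 0
  have hσₘ := hσpos (Fin.last m)
  have hle₀ : ∀ i, σ i ≤ σ 0 := fun i => hσmono 0 i (Fin.zero_le i)
  have hleₘ : ∀ i, σ (Fin.last m) ≤ σ i := fun i => hσmono i _ (Fin.le_last i)
  choose b hb using fun i => exists_nat_pow_near ((one_le_div (hσpos i)).2 (hle₀ i)) one_lt_two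
  have hκ₁ : 1 ≤ κ := hκ ▸ (one_le_div hσₘ).2 (hle₀ _)
  obtain ⟨n, hn⟩ := exists_nat_pow_near hκ₁ one_lt_two
  have hbn : ∀ i ∈ univ, b i ∈ range (n + 1) := fun i _ => by
    have hratio : σ 0 / σ i ≤ κ := hκ ▸ div_le_div_of_nonneg_left hσ₀.le hσₘ (hleₘ i)
    exact mem_range.2 <| (pow_lt_pow_iff_right₀ (one_lt_two : (1 : ℝ) < 2)).1 <|
      (hb i).1.trans_lt (hratio.trans_lt hn.2)
  calc _ = ∫⁻ t in Set.Ioi 0, ENNReal.ofReal (gfSpeed σ α univ t) := rfl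
    _ ≤ ENNReal.ofReal (√(∑ k ∈ range (n + 1),
          (σ 0 / 2 ^ k / max (σ 0 / 2 ^ (k + 1)) (σ (Fin.last m))) ^ 2) * √(∑ i, α i ^ 2)) :=
        lintegral_gfSpeed_le_of_bands α hbn (fun k _ => lt_max_of_lt_right hσₘ) fun i _ =>
          mem_Icc_dyadic_band (hσpos i) (hleₘ i) (hb i).1 (hb i).2
    _ ≤ ENNReal.ofReal (√(4 * n + (κ / 2 ^ n) ^ 2) * √(∑ i, α i ^ 2)) := by
        refine ENNReal.ofReal_le_ofReal (mul_le_mul_of_nonneg_right (sqrt_le_sqrt ?_) ?_)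
        exacts [hκ ▸ sum_sq_div_max_dyadic_le hσ₀ hσₘ n, sqrt_nonneg _]
    _ ≤ _ := by
        refine ENNReal.ofReal_le_ofReal (mul_le_mul_of_nonneg_right ?_ (sqrt_nonneg _))
        exact sqrt_four_mul_add_sq_div_pow_le hn.1 hn.2.le
end

section
/- Let A be an n×d real matrix, Σ = AᵀA/n with nonzero eigenvalues σ_1 ≥ ... ≥ σ_p > 0, and consider gradient descent x_{k+1} = x_k - (η/n)Aᵀ(Ax_k - y) with η ≤ 1/σ_1. Then the discrete path length is bounded by the continuous one plus one extra term: Σ_{k=0}^∞ ‖x_k - x_{k+1}‖ ≤ dist(x_0, X*) + ∫_0^∞ √(Σ_i e^{-2tσ_i}σ_i²α_i²) dt, where α_i is the component of x_0 - Π_{X*}(x_0) along the i-th eigenvector and X* is the solution set of (1/2n)‖y - Ax‖². -/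
open MeasureTheory ENNReal Matrix

open Finset Set Real

/-!
Write `e k = x k - p0`. As `p0` minimises the least-squares objective, `Aᵀ (A p0 - y) = 0`, so
`e (k + 1) = (1 - η Σ) e k`, and in the orthonormal eigenbasis the `k`-th step `x k - x (k + 1)`
has coordinates `(1 - s i) ^ k * (s i * α i)` with `s i = η σ i ∈ (0, 1]`. Since
`(1 - s) ^ k ≤ exp (-k s)`, step `k` is at most the speed at time `k` of the gradient flow with
rates `s i`. That speed is antitone in time, so the steps `k ≥ 1` are bounded by its integral over
consecutive unit intervals, and step `0` by `‖α‖ = ‖x 0 - p0‖`. Rescaling time by `η` turns the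
rates `s i` back into `σ i`.
-/

section LeastSquares

variable {m n : Type*} [Fintype m] [Fintype n] {A : Matrix m n ℝ} {y : m → ℝ} {z : n → ℝ}

theorem transpose_mulVec_sub_eq_zero_of_forall_le
    (hz : ∀ w, ∑ j, (y j - (A *ᵥ z) j) ^ 2 ≤ ∑ j, (y j - (A *ᵥ w) j) ^ 2) :
    Aᵀ *ᵥ (A *ᵥ z - y) = 0 := by
  set r := A *ᵥ z - y
  set g := Aᵀ *ᵥ r
  -- The perturbation `t ↦ S (z + t • g) - S z = ‖A g‖² t² + 2 ‖g‖² t` is a quadratic that is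
  -- nonnegative everywhere, so its discriminant `4 ‖g‖⁴` is nonpositive.
  have hrg : r ⬝ᵥ (A *ᵥ g) = g ⬝ᵥ g := by rw [dotProduct_mulVec, ← mulVec_transpose]
  have hexpand (t : ℝ) : ∑ j, (y j - (A *ᵥ (z + t • g)) j) ^ 2 =
      r ⬝ᵥ r + ((A *ᵥ g) ⬝ᵥ (A *ᵥ g) * (t * t) + 2 * (g ⬝ᵥ g) * t + 0) := by
    rw [← hrg]
    calc _ = ∑ j, (r j * r j +
          ((A *ᵥ g) j * (A *ᵥ g) j * (t * t) + 2 * (r j * (A *ᵥ g) j) * t)) :=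
          sum_congr rfl fun j _ => by
            simp only [r, mulVec_add, mulVec_smul, Pi.add_apply, Pi.sub_apply, Pi.smul_apply,
              smul_eq_mul]
            ring
      _ = _ := by simp only [sum_add_distrib, ← sum_mul, ← mul_sum, dotProduct, add_zero]
  have hquad (t : ℝ) : 0 ≤ (A *ᵥ g) ⬝ᵥ (A *ᵥ g) * (t * t) + 2 * (g ⬝ᵥ g) * t + 0 := by
    have h := hz (z + t • g)
    rw [hexpand, ← add_zero z, ← zero_smul ℝ g, hexpand] at h
    linarith
  have hdiscr := discrim_le_zero hquad
  rw [discrim] at hdiscr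
  exact dotProduct_self_eq_zero.mp (by nlinarith [sq_nonneg (g ⬝ᵥ g)])

theorem transpose_mulVec_sub_eq_mulVec_sub (hz : Aᵀ *ᵥ (A *ᵥ z - y) = 0) (w : n → ℝ) :
    Aᵀ *ᵥ (A *ᵥ w - y) = (Aᵀ * A) *ᵥ (w - z) := by
  calc Aᵀ *ᵥ (A *ᵥ w - y) = Aᵀ *ᵥ (A *ᵥ (w - z)) + Aᵀ *ᵥ (A *ᵥ z - y) := by
        rw [← mulVec_add, mulVec_sub A, sub_add_sub_cancel]
    _ = (Aᵀ * A) *ᵥ (w - z) := by rw [hz, add_zero, mulVec_mulVec]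

end LeastSquares

theorem sum_sq_sum_smul_of_orthonormal {ι m : Type*} [Fintype ι] [Fintype m] [DecidableEq ι]
    {v : ι → m → ℝ} (hv : ∀ i j, ∑ l, v i l * v j l = if i = j then 1 else 0) (c : ι → ℝ) :
    ∑ l, (∑ i, c i • v i) l ^ 2 = ∑ i, c i ^ 2 := by
  have hexpand (l : m) : (∑ i, c i • v i) l ^ 2 = ∑ i, ∑ j, c i * c j * (v i l * v j l) := by
    simp only [Finset.sum_apply, Pi.smul_apply, smul_eq_mul, sq, sum_mul_sum]
    exact sum_congr rfl fun _ _ => sum_congr rfl fun _ _ => by ring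
  simp only [hexpand]
  rw [sum_comm]
  simp only [sum_comm (s := univ (α := m)), ← mul_sum, hv, mul_ite, mul_one, mul_zero,
    sum_ite_eq, Finset.mem_univ, if_true, sq]

section Eigenvectors

variable {ι m : Type*} [Fintype ι] [Fintype m] {M : Matrix m m ℝ} {σ : ι → ℝ} {v : ι → m → ℝ}

theorem mulVec_sum_smul_of_eigenvectors (hv : ∀ i, M *ᵥ v i = σ i • v i) (c : ι → ℝ) :
    M *ᵥ ∑ i, c i • v i = ∑ i, (σ i * c i) • v i := by
  simp only [mulVec_sum, mulVec_smul, hv, smul_smul, mul_comm]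

variable {η : ℝ} {e : ℕ → m → ℝ} {α : ι → ℝ}

theorem eq_sum_pow_smul_of_eigenvectors (hv : ∀ i, M *ᵥ v i = σ i • v i)
    (he : ∀ k, e (k + 1) = e k - η • M *ᵥ e k) (h0 : e 0 = ∑ i, α i • v i) (k : ℕ) :
    e k = ∑ i, ((1 - η * σ i) ^ k * α i) • v i := by
  induction k with
  | zero => simpa using h0
  | succ k ih =>
    rw [he, ih, mulVec_sum_smul_of_eigenvectors hv, smul_sum, ← sum_sub_distrib]
    exact sum_congr rfl fun i _ => by rw [smul_smul, ← sub_smul]; ring_nf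

theorem sub_succ_eq_sum_pow_smul_of_eigenvectors (hv : ∀ i, M *ᵥ v i = σ i • v i)
    (he : ∀ k, e (k + 1) = e k - η • M *ᵥ e k) (h0 : e 0 = ∑ i, α i • v i) (k : ℕ) :
    e k - e (k + 1) = ∑ i, ((1 - η * σ i) ^ k * (η * σ i * α i)) • v i := by
  rw [he, _root_.sub_sub_cancel, eq_sum_pow_smul_of_eigenvectors hv he h0,
    mulVec_sum_smul_of_eigenvectors hv, smul_sum]
  exact sum_congr rfl fun i _ => by rw [smul_smul]; ring_nf

end Eigenvectors

section GradientFlow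

variable {ι : Type*} [Fintype ι] (σ α : ι → ℝ)

noncomputable def gradientFlowSpeed (t : ℝ) : ℝ :=
  √(∑ i, exp (-2 * t * σ i) * σ i ^ 2 * α i ^ 2)

variable {σ α}

theorem gradientFlowSpeed_nonneg (t : ℝ) : 0 ≤ gradientFlowSpeed σ α t := sqrt_nonneg _

theorem antitone_gradientFlowSpeed (hσ : ∀ i, 0 ≤ σ i) : Antitone (gradientFlowSpeed σ α) :=
  fun s t hst => sqrt_le_sqrt <| sum_le_sum fun i _ => by
    gcongr ?_ * _ * _
    exact exp_le_exp.mpr (by nlinarith [hσ i])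

theorem gradientFlowSpeed_le_sum_exp (t : ℝ) :
    gradientFlowSpeed σ α t ≤ ∑ i, |σ i * α i| * exp (-σ i * t) := by
  have hterm (i : ι) :
      exp (-2 * t * σ i) * σ i ^ 2 * α i ^ 2 = (|σ i * α i| * exp (-σ i * t)) ^ 2 := by
    rw [mul_pow, sq_abs, sq (exp _), ← exp_add]
    ring_nf
  rw [gradientFlowSpeed, sum_congr rfl fun i _ => hterm i]
  calc _ ≤ √((∑ i, |σ i * α i| * exp (-σ i * t)) ^ 2) :=
        sqrt_le_sqrt (sum_sq_le_sq_sum_of_nonneg fun i _ => by positivity)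
    _ = _ := sqrt_sq (sum_nonneg fun i _ => by positivity)

theorem integrableOn_gradientFlowSpeed (hσ : ∀ i, 0 < σ i) :
    IntegrableOn (gradientFlowSpeed σ α) (Ioi 0) := by
  refine Integrable.mono' (g := fun t => ∑ i, |σ i * α i| * exp (-σ i * t))
    (integrable_finsetSum _ fun i _ => (exp_neg_integrableOn_Ioi 0 (hσ i)).const_mul _) ?_ ?_
  · exact (Continuous.aestronglyMeasurable (by unfold gradientFlowSpeed; fun_prop)).restrict
  · refine ae_of_all _ fun t => ?_
    rw [norm_of_nonneg (gradientFlowSpeed_nonneg t)]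
    exact gradientFlowSpeed_le_sum_exp t

theorem mul_gradientFlowSpeed_mul {η : ℝ} (hη : 0 ≤ η) (t : ℝ) :
    η * gradientFlowSpeed σ α (η * t) = gradientFlowSpeed (fun i => η * σ i) α t := by
  calc η * gradientFlowSpeed σ α (η * t)
      = √(η ^ 2 * ∑ i, exp (-2 * (η * t) * σ i) * σ i ^ 2 * α i ^ 2) := by
        rw [sqrt_mul (sq_nonneg η), sqrt_sq hη, gradientFlowSpeed]
    _ = _ := by
        rw [gradientFlowSpeed, mul_sum]
        exact congrArg sqrt (sum_congr rfl fun i _ => by ring_nf)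

theorem integral_gradientFlowSpeed_mul {η : ℝ} (hη : 0 < η) :
    ∫ t in Ioi 0, gradientFlowSpeed (fun i => η * σ i) α t =
      ∫ t in Ioi 0, gradientFlowSpeed σ α t := by
  simp_rw [← mul_gradientFlowSpeed_mul hη.le, integral_const_mul]
  rw [← smul_eq_mul, integral_comp_mul_left_Ioi' _ _ hη, mul_zero]

theorem sum_range_gradientFlowSpeed_le_integral (hσ : ∀ i, 0 < σ i) (N : ℕ) :
    ∑ k ∈ range N, gradientFlowSpeed σ α (k + 1) ≤ ∫ t in Ioi 0, gradientFlowSpeed σ α t := by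
  have hanti := antitone_gradientFlowSpeed (α := α) fun i => (hσ i).le
  calc ∑ k ∈ range N, gradientFlowSpeed σ α (k + 1)
      ≤ ∫ t in (0 : ℝ)..(0 + N), gradientFlowSpeed σ α t := by
        simpa using (hanti.antitoneOn (Icc 0 (0 + N))).sum_le_integral
    _ ≤ _ := by
        rw [zero_add, intervalIntegral.integral_of_le (Nat.cast_nonneg N)]
        exact setIntegral_mono_set (integrableOn_gradientFlowSpeed hσ)
          (ae_of_all _ fun t => gradientFlowSpeed_nonneg t) Ioc_subset_Ioi_self.eventuallyLE

end GradientFlow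

section GradientDescent

variable {ι : Type*} [Fintype ι]

noncomputable def gdStepLength (s α : ι → ℝ) (k : ℕ) : ℝ :=
  √(∑ i, ((1 - s i) ^ k * (s i * α i)) ^ 2)

theorem one_sub_pow_sq_le_exp {s : ℝ} (hs : s ≤ 1) (k : ℕ) :
    ((1 - s) ^ k) ^ 2 ≤ exp (-2 * k * s) := by
  calc ((1 - s) ^ k) ^ 2 ≤ (exp (-s) ^ k) ^ 2 := by
        gcongr
        linarith [add_one_le_exp (-s)]
    _ = exp (-2 * k * s) := by rw [← exp_nat_mul, ← exp_nat_mul]; ring_nf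

variable {s α : ι → ℝ}

theorem gdStepLength_le_gradientFlowSpeed (hs : ∀ i, s i ≤ 1) (k : ℕ) :
    gdStepLength s α k ≤ gradientFlowSpeed s α k :=
  sqrt_le_sqrt <| sum_le_sum fun i _ => by
    rw [mul_pow, mul_pow, ← mul_assoc]
    gcongr
    exact one_sub_pow_sq_le_exp (hs i) k

theorem gdStepLength_zero_le (hs0 : ∀ i, 0 ≤ s i) (hs1 : ∀ i, s i ≤ 1) :
    gdStepLength s α 0 ≤ √(∑ i, α i ^ 2) :=
  sqrt_le_sqrt <| sum_le_sum fun i _ => by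
    rw [pow_zero, one_mul, mul_pow]
    exact mul_le_of_le_one_left (sq_nonneg _) (pow_le_one₀ (hs0 i) (hs1 i))

theorem tsum_gdStepLength_le (hs0 : ∀ i, 0 < s i) (hs1 : ∀ i, s i ≤ 1) :
    ∑' k, ENNReal.ofReal (gdStepLength s α k) ≤
      ENNReal.ofReal (√(∑ i, α i ^ 2) + ∫ t in Ioi 0, gradientFlowSpeed s α t) := by
  refine ENNReal.tsum_le_of_sum_range_le fun N => ?_
  rw [← ENNReal.ofReal_sum_of_nonneg (f := gdStepLength s α) fun k _ => sqrt_nonneg _]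
  refine ENNReal.ofReal_le_ofReal ?_
  cases N with
  | zero =>
    exact (sum_range_zero _).trans_le (add_nonneg (sqrt_nonneg _)
      (setIntegral_nonneg measurableSet_Ioi fun t _ => gradientFlowSpeed_nonneg t))
  | succ N =>
    rw [sum_range_succ']
    have hsum : ∑ k ∈ range N, gdStepLength s α (k + 1) ≤ ∫ t in Ioi 0, gradientFlowSpeed s α t :=
      calc _ ≤ ∑ k ∈ range N, gradientFlowSpeed s α (k + 1) := sum_le_sum fun k _ => by
            exact_mod_cast gdStepLength_le_gradientFlowSpeed hs1 (k + 1)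
        _ ≤ _ := sum_range_gradientFlowSpeed_le_integral hs0 N
    linarith [gdStepLength_zero_le (α := α) (fun i => (hs0 i).le) hs1]

end GradientDescent

theorem quadratic_gd_path_length_le_gf_general {n d p : ℕ} (hn : 0 < n)
    (A : Matrix (Fin n) (Fin d) ℝ) (y : Fin n → ℝ)
    (σ : Fin p → ℝ) (v : Fin p → (Fin d → ℝ)) (α : Fin p → ℝ)
    (η : ℝ) (hη0 : 0 < η)
    (hσpos : ∀ i, 0 < σ i)
    (hη1 : ∀ i, η * σ i ≤ 1)
    (heig : ∀ i, (((1 : ℝ) / n) • (Aᵀ * A)).mulVec (v i) = σ i • v i)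
    (hortho : ∀ i j, (∑ l, v i l * v j l) = if i = j then (1 : ℝ) else 0)
    (f : (Fin d → ℝ) → ℝ)
    (hf : ∀ z, f z = (1 / (2 * n)) * ∑ j, (y j - A.mulVec z j) ^ 2)
    (Xstar : Set (Fin d → ℝ)) (hX : Xstar = {z | ∀ w, f z ≤ f w})
    (x : ℕ → (Fin d → ℝ))
    (hx : ∀ k : ℕ,
      x (k + 1) = fun j => x k j - (η / n) * (Aᵀ.mulVec (A.mulVec (x k) - y)) j)
    (p0 : Fin d → ℝ) (hp0 : p0 ∈ Xstar)
    (hdecomp : ∀ j, x 0 j - p0 j = ∑ i, α i * v i j) :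
    ∑' k : ℕ, ENNReal.ofReal (Real.sqrt (∑ j, (x k j - x (k + 1) j) ^ 2)) ≤
      ENNReal.ofReal (Real.sqrt (∑ j, (x 0 j - p0 j) ^ 2) +
        ∫ t in Set.Ioi (0 : ℝ),
          Real.sqrt (∑ i, Real.exp (-2 * t * σ i) * σ i ^ 2 * α i ^ 2)) := by
  subst hX
  have hgrad : Aᵀ *ᵥ (A *ᵥ p0 - y) = 0 := by
    refine transpose_mulVec_sub_eq_zero_of_forall_le fun w => ?_
    have hmin := hp0 w
    rw [hf, hf] at hmin
    exact le_of_mul_le_mul_left hmin (by positivity)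
  have hstep (k : ℕ) : x (k + 1) - p0 =
      (x k - p0) - η • (((1 : ℝ) / n) • (Aᵀ * A)) *ᵥ (x k - p0) := by
    ext j
    rw [hx k, smul_mulVec, ← transpose_mulVec_sub_eq_mulVec_sub hgrad]
    simp only [Pi.sub_apply, Pi.smul_apply, smul_eq_mul]
    ring
  have h0 : x 0 - p0 = ∑ i, α i • v i := by
    ext j
    simp [hdecomp, Finset.sum_apply]
  have hlen (k : ℕ) :
      √(∑ j, (x k j - x (k + 1) j) ^ 2) = gdStepLength (fun i => η * σ i) α k := by
    rw [gdStepLength, ← sum_sq_sum_smul_of_orthonormal hortho,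
      ← sub_succ_eq_sum_pow_smul_of_eigenvectors (e := fun k => x k - p0) heig hstep h0,
      sub_sub_sub_cancel_right]
    rfl
  have hdist : √(∑ j, (x 0 j - p0 j) ^ 2) = √(∑ i, α i ^ 2) := by
    rw [← sum_sq_sum_smul_of_orthonormal hortho, ← h0]
    rfl
  simp only [hlen, hdist]
  change _ ≤ ENNReal.ofReal (_ + ∫ t in Ioi 0, gradientFlowSpeed σ α t)
  rw [← integral_gradientFlowSpeed_mul (α := α) hη0]
  exact tsum_gdStepLength_le (fun i => mul_pos hη0 (hσpos i)) hη1

theorem quadratic_gd_path_length_le_gf {n d p : ℕ} (hn : 0 < n)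
    (A : Matrix (Fin n) (Fin d) ℝ) (y : Fin n → ℝ)
    (σ : Fin p → ℝ) (v : Fin p → (Fin d → ℝ)) (α : Fin p → ℝ)
    (η : ℝ) (hη0 : 0 < η)
    (hσpos : ∀ i, 0 < σ i)
    (hσmono : ∀ i j : Fin p, i ≤ j → σ j ≤ σ i)
    (hη1 : ∀ i, η * σ i ≤ 1)
    (heig : ∀ i, (((1 : ℝ) / n) • (Aᵀ * A)).mulVec (v i) = σ i • v i)
    (hortho : ∀ i j, (∑ l, v i l * v j l) = if i = j then (1 : ℝ) else 0)
    (f : (Fin d → ℝ) → ℝ)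
    (hf : ∀ z, f z = (1 / (2 * n)) * ∑ j, (y j - A.mulVec z j) ^ 2)
    (Xstar : Set (Fin d → ℝ)) (hX : Xstar = {z | ∀ w, f z ≤ f w})
    (x : ℕ → (Fin d → ℝ))
    (hx : ∀ k : ℕ,
      x (k + 1) = fun j => x k j - (η / n) * (Aᵀ.mulVec (A.mulVec (x k) - y)) j)
    (p0 : Fin d → ℝ) (hp0 : p0 ∈ Xstar)
    (hproj : ∀ q ∈ Xstar,
      Real.sqrt (∑ j, (x 0 j - p0 j) ^ 2) ≤ Real.sqrt (∑ j, (x 0 j - q j) ^ 2))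
    (hdecomp : ∀ j, x 0 j - p0 j = ∑ i, α i * v i j) :
    ∑' k : ℕ, ENNReal.ofReal (Real.sqrt (∑ j, (x k j - x (k + 1) j) ^ 2)) ≤
      ENNReal.ofReal (Real.sqrt (∑ j, (x 0 j - p0 j) ^ 2) +
        ∫ t in Set.Ioi (0 : ℝ),
          Real.sqrt (∑ i, Real.exp (-2 * t * σ i) * σ i ^ 2 * α i ^ 2)) :=
  quadratic_gd_path_length_le_gf_general hn A y σ v α η hη0 hσpos hη1 heig hortho f hf Xstar hX x hx
    p0 hp0 hdecomp
end

section
/- Let x_k, x_{k+1} be consecutive points of a self-contracted sequence with tail Γ = {x_{k+2}, x_{k+3}, ...}, let x' = (1/3)x_{k+1} + (2/3)x_k and v = (x_k - x_{k+1})/‖x_k - x_{k+1}‖. Then for every y ∈ Γ, ⟨v, y - x'⟩ ≤ -‖x_k - x_{k+1}‖/6. -/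
/-!
The self-contraction inequality `‖y - x_{k+1}‖ ≤ ‖y - x_k‖` says exactly that `y` lies in the
closed half-space beyond the perpendicular bisector of `[x_k, x_{k+1}]`, i.e.
`⟪x_k - x_{k+1}, y - m⟫ ≤ 0` for the midpoint `m`. Since `x' = m + (x_k - x_{k+1}) / 6`, moving
from `m` to `x'` lowers this inner product by a further `‖x_k - x_{k+1}‖² / 6`.
-/

open RealInnerProductSpace

section HalfSpace

variable {E : Type*} [NormedAddCommGroup E] [InnerProductSpace ℝ E]

theorem inner_sub_sub_midpoint (a b y : E) :
    ⟪a - b, y - midpoint ℝ a b⟫ = (‖y - b‖ ^ 2 - ‖y - a‖ ^ 2) / 2 := by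
  rw [midpoint_eq_smul_add, invOf_eq_inv, norm_sub_sq_real, norm_sub_sq_real]
  simp only [inner_sub_left, inner_sub_right, inner_smul_right, inner_add_right,
    real_inner_self_eq_norm_sq, real_inner_comm a y, real_inner_comm b y, real_inner_comm a b]
  ring

theorem inner_sub_sub_midpoint_nonpos {a b y : E} (h : ‖y - b‖ ≤ ‖y - a‖) :
    ⟪a - b, y - midpoint ℝ a b⟫ ≤ 0 := by
  rw [inner_sub_sub_midpoint]
  nlinarith [norm_nonneg (y - b)]

theorem inner_sub_sub_two_thirds_le {a b y : E} (h : ‖y - b‖ ≤ ‖y - a‖) :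
    ⟪a - b, y - ((1 / 3 : ℝ) • b + (2 / 3 : ℝ) • a)⟫ ≤ -‖a - b‖ ^ 2 / 6 := by
  have hx' : (1 / 3 : ℝ) • b + (2 / 3 : ℝ) • a = midpoint ℝ a b + (1 / 6 : ℝ) • (a - b) := by
    rw [midpoint_eq_smul_add, invOf_eq_inv]
    module
  calc ⟪a - b, y - ((1 / 3 : ℝ) • b + (2 / 3 : ℝ) • a)⟫
      = ⟪a - b, y - midpoint ℝ a b⟫ - ‖a - b‖ ^ 2 / 6 := by
        rw [hx', sub_add_eq_sub_sub, inner_sub_right, real_inner_smul_right,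
          real_inner_self_eq_norm_sq]
        ring
    _ ≤ -‖a - b‖ ^ 2 / 6 := by linarith [inner_sub_sub_midpoint_nonpos h]

end HalfSpace

theorem self_contracted_negative_inner_general {d : ℕ}
    (x : ℕ → EuclideanSpace ℝ (Fin d)) (k : ℕ)
    (hsc : ∀ m : ℕ, k + 2 ≤ m → ‖x m - x (k + 1)‖ ≤ ‖x m - x k‖) :
    ∀ m : ℕ, k + 2 ≤ m →
      ⟪‖x k - x (k + 1)‖⁻¹ • (x k - x (k + 1)),
        x m - ((1 / 3 : ℝ) • x (k + 1) + (2 / 3 : ℝ) • x k)⟫ ≤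
      -‖x k - x (k + 1)‖ / 6 := by
  intro m hm
  set r := ‖x k - x (k + 1)‖
  rw [real_inner_smul_left]
  calc r⁻¹ * ⟪x k - x (k + 1), x m - ((1 / 3 : ℝ) • x (k + 1) + (2 / 3 : ℝ) • x k)⟫
      ≤ r⁻¹ * (-r ^ 2 / 6) :=
        mul_le_mul_of_nonneg_left (inner_sub_sub_two_thirds_le (hsc m hm)) (by positivity)
    _ = -r / 6 := by
        rcases eq_or_ne r 0 with hr | hr
        · simp [hr]
        · field_simp

theorem self_contracted_negative_inner {d : ℕ}
    (x : ℕ → EuclideanSpace ℝ (Fin d)) (k : ℕ)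
    (hne : x (k + 1) ≠ x k)
    (hsc : ∀ m : ℕ, k + 2 ≤ m → ‖x m - x (k + 1)‖ ≤ ‖x m - x k‖) :
    ∀ m : ℕ, k + 2 ≤ m →
      ⟪‖x k - x (k + 1)‖⁻¹ • (x k - x (k + 1)),
        x m - ((1 / 3 : ℝ) • x (k + 1) + (2 / 3 : ℝ) • x k)⟫ ≤
      -‖x k - x (k + 1)‖ / 6 :=
  self_contracted_negative_inner_general x k hsc
end
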